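/- arXiv:2205.07296 — 2 statements merged into one kernel-verified Lean document; each statement's English description precedes it below -/
import Mathlib

section
/- There is an absolute constant C > 0 with the following property. Let G be an abelian group and A ⊆ G a finite set with |A| ≥ 2. Then for every positive integer n with n ≤ C⁻¹·log|A| one has |nA| ≥ |A| · (dim(A)/(C·log|A|))^{n-1}. -/
/-!
Let `d = dim A` and `L = log |A|`; if `d < 4 L` the bound is below `|A| ≤ |nA|`. Otherwise fix a
dissociated `Λ ⊆ A` with `|Λ| = d`: distinct `M`-element subsets of `Λ` have distinct sums, so
`|MA| ≥ C(d, M) ≥ (d / M) ^ M`. Choosing `M = k (n - 1)` between `L` and `2 L` gives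
`|MA| ≥ 2 ^ M (d / 4L) ^ M ≥ |A| (d / 4L) ^ M`, and the Plünnecke–Ruzsa inequality
`|k ((n - 1) A)| ≤ (|nA| / |A|) ^ k |A|` turns this into the bound for `nA` after taking `k`-th
roots.
-/

open Finset Pointwise

universe u

/-- A finset `Λ` in an abelian group is `k`-dissociated if every integer relation
`∑ ε_λ • λ = 0` with `|ε_λ| ≤ k` forces all `ε_λ = 0`. -/
def IsKDissociated {G : Type*} [AddCommGroup G] (k : ℕ) (Λ : Finset G) : Prop :=
  ∀ ε : G → ℤ, (∀ x ∈ Λ, |ε x| ≤ (k : ℤ)) → (∑ x ∈ Λ, ε x • x) = 0 → ∀ x ∈ Λ, ε x = 0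

/-- `addDim k A` is the maximal size of a `k`-dissociated subset of `A`. -/
noncomputable def addDim {G : Type*} [AddCommGroup G] (k : ℕ) (A : Finset G) : ℕ :=
  sSup {n : ℕ | ∃ Λ : Finset G, Λ ⊆ A ∧ Λ.card = n ∧ IsKDissociated k Λ}

/-- `nFold A n` is the `n`-fold sumset `A + A + ⋯ + A` (`n` summands). -/
def nFold {G : Type*} [AddCommGroup G] [DecidableEq G] (A : Finset G) : ℕ → Finset G
  | 0 => {0}
  | n + 1 => nFold A n + A

variable {G : Type*} [AddCommGroup G]

theorem nFold_eq_nsmul [DecidableEq G] (A : Finset G) : ∀ n, nFold A n = n • A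
  | 0 => by rw [zero_nsmul]; rfl
  | n + 1 => by rw [succ_nsmul, ← nFold_eq_nsmul A n]; rfl

theorem exists_isKDissociated_card_eq_addDim (k : ℕ) (A : Finset G) :
    ∃ Λ ⊆ A, #Λ = addDim k A ∧ IsKDissociated k Λ :=
  Nat.sSup_mem (s := {n | ∃ Λ ⊆ A, #Λ = n ∧ IsKDissociated k Λ})
    ⟨0, ∅, empty_subset A, card_empty, fun _ _ _ _ hx ↦ absurd hx (notMem_empty _)⟩
    ⟨#A, fun _ ⟨_, hΛA, hΛ, _⟩ ↦ hΛ ▸ card_le_card hΛA⟩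

theorem IsKDissociated.addDissociated {Λ : Finset G} (hΛ : IsKDissociated 1 Λ) :
    AddDissociated (Λ : Set G) := by
  classical
  intro s hs t ht hst
  replace hs : s ⊆ Λ := coe_subset.1 hs
  replace ht : t ⊆ Λ := coe_subset.1 ht
  have sum_indicator : ∀ u ⊆ Λ, ∑ x ∈ Λ, (if x ∈ u then (1 : ℤ) else 0) • x = ∑ x ∈ u, x := by
    intro u hu
    simp only [ite_smul, one_smul, zero_smul, sum_ite_mem, inter_eq_right.2 hu]
  have hε := hΛ (fun x ↦ (if x ∈ s then 1 else 0) - (if x ∈ t then 1 else 0))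
    (fun x _ ↦ by split_ifs <;> simp)
    (by simp only [sub_smul, sum_sub_distrib, sum_indicator s hs, sum_indicator t ht, hst,
      sub_self])
  ext x
  constructor
  · intro hx; by_contra hx'; simpa [hx, hx'] using hε x (hs hx)
  · intro hx; by_contra hx'; simpa [hx, hx'] using hε x (ht hx)

theorem sum_mem_card_nsmul [DecidableEq G] {s A : Finset G} (hsA : s ⊆ A) :
    ∑ x ∈ s, x ∈ #s • A := by
  induction s using Finset.induction_on with
  | empty => simp
  | insert a s ha ih =>
    rw [sum_insert ha, card_insert_of_notMem ha, succ_nsmul']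
    exact add_mem_add (hsA (mem_insert_self a s)) (ih ((subset_insert a s).trans hsA))

theorem AddDissociated.choose_card_le_card_nsmul [DecidableEq G] {Λ A : Finset G}
    (hΛ : AddDissociated (Λ : Set G)) (hΛA : Λ ⊆ A) (m : ℕ) :
    (#Λ).choose m ≤ #(m • A) := by
  rw [← card_powersetCard]
  refine card_le_card_of_injOn (∑ x ∈ ·, x) (fun t ht ↦ ?_) (hΛ.mono fun t ht ↦ ?_)
  · obtain ⟨htΛ, rfl⟩ := mem_powersetCard.1 ht
    exact sum_mem_card_nsmul (htΛ.trans hΛA)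
  · exact coe_subset.2 (mem_powersetCard.1 ht).1

theorem Nat.div_pow_le_choose {α : Type*} [Field α] [LinearOrder α] [IsStrictOrderedRing α]
    {r n : ℕ} (h : r ≤ n) : ((n : α) / r) ^ r ≤ n.choose r := by
  induction r generalizing n with
  | zero => simp
  | succ r ih =>
    obtain ⟨n, rfl⟩ : ∃ e, n = e + 1 := ⟨n - 1, by omega⟩
    have ratio_le : ((n + 1 : α) / (r + 1)) ^ r ≤ ((n : α) / r) ^ r := by
      rcases r.eq_zero_or_pos with rfl | hr
      · simp
      refine pow_le_pow_left₀ (by positivity) ?_ r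
      rw [div_le_div_iff₀ (by positivity) (by positivity)]
      have : (r : α) ≤ n := by exact_mod_cast (by omega : r ≤ n)
      linarith
    calc (((n + 1 : ℕ) : α) / (r + 1 : ℕ)) ^ (r + 1)
        = (n + 1) / (r + 1) * ((n + 1 : α) / (r + 1)) ^ r := by push_cast; ring
      _ ≤ (n + 1) / (r + 1) * n.choose r := by gcongr; exact ratio_le.trans (ih (by omega))
      _ = (n + 1).choose (r + 1) := by
        rw [div_mul_eq_mul_div, div_eq_iff (by positivity)]
        exact_mod_cast add_one_mul_choose_eq n r

theorem card_mul_pow_le_card_succ_nsmul [DecidableEq G] {A : Finset G} (hA : A.Nonempty)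
    {y : ℝ} (hy : 0 ≤ y) {m k : ℕ} (hk : k ≠ 0)
    (h : #A * y ^ (m * k) ≤ #((m * k) • A)) :
    #A * y ^ m ≤ #((m + 1) • A) := by
  have hA₀ : (0 : ℝ) < #A := by exact_mod_cast hA.card_pos
  set t : ℝ := #((m + 1) • A) / #A
  have pluennecke : (#((m * k) • A) : ℝ) ≤ t ^ k * #A := by
    have := pluennecke_ruzsa_inequality_nsmul_add hA (m • A) k
    rw [← mul_nsmul, ← succ_nsmul'] at this
    simpa using NNRat.cast_le (K := ℝ) |>.2 this
  have : (y ^ m) ^ k ≤ t ^ k := by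
    rw [← pow_mul]
    exact le_of_mul_le_mul_left (by linarith) hA₀
  calc (#A : ℝ) * y ^ m ≤ #A * t := by
        gcongr; exact (pow_le_pow_iff_left₀ (by positivity) (by positivity) hk).1 this
    _ = #((m + 1) • A) := mul_div_cancel₀ _ hA₀.ne'

theorem exists_nat_mul_mem_Ico {L a : ℝ} (hL : 0 < L) (ha : 0 < a) :
    ∃ k : ℕ, k ≠ 0 ∧ L ≤ a * k ∧ a * k < L + a := by
  refine ⟨⌈L / a⌉₊, (Nat.ceil_pos.2 (by positivity)).ne', ?_, ?_⟩
  · rw [← div_le_iff₀' ha]; exact Nat.le_ceil _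
  · rw [← lt_div_iff₀' ha, add_div, div_self ha.ne']
    exact Nat.ceil_lt_add_one (by positivity)

theorem card_mul_addDim_div_pow_le_card_succ_nsmul [DecidableEq G] {A : Finset G}
    (hA : A.Nonempty) {m : ℕ} (hm : m ≠ 0) (hmL : m ≤ Real.logb 2 #A)
    (hdL : 4 * Real.logb 2 #A ≤ addDim 1 A) :
    #A * ((addDim 1 A : ℝ) / (4 * Real.logb 2 #A)) ^ m ≤ #((m + 1) • A) := by
  obtain ⟨Λ, hΛA, hΛd, hΛ⟩ := exists_isKDissociated_card_eq_addDim 1 A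
  set L := Real.logb 2 #A
  set d := addDim 1 A
  have hm₀ : (0 : ℝ) < m := by positivity
  have hL : 0 < L := hm₀.trans_le hmL
  obtain ⟨k, hk, hLM, hML⟩ := exists_nat_mul_mem_Ico hL hm₀
  refine card_mul_pow_le_card_succ_nsmul hA (by positivity) hk ?_
  have hM2L : ((m * k : ℕ) : ℝ) ≤ 2 * L := by push_cast; linarith
  have hA_le : (#A : ℝ) ≤ 2 ^ (m * k) := by
    calc (#A : ℝ) = 2 ^ L :=
          (Real.rpow_logb two_pos one_lt_two.ne' (by exact_mod_cast hA.card_pos)).symm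
      _ ≤ 2 ^ ((m * k : ℕ) : ℝ) :=
          Real.rpow_le_rpow_of_exponent_le one_le_two (by push_cast; exact hLM)
      _ = 2 ^ (m * k) := Real.rpow_natCast _ _
  calc #A * (d / (4 * L)) ^ (m * k) ≤ 2 ^ (m * k) * (d / (4 * L)) ^ (m * k) := by gcongr
    _ = (d / (2 * L)) ^ (m * k) := by rw [← mul_pow]; congr 1; field_simp; ring
    _ ≤ (d / (m * k : ℕ)) ^ (m * k) := by gcongr
    _ ≤ d.choose (m * k) := Nat.div_pow_le_choose (by
        have : ((m * k : ℕ) : ℝ) ≤ d := by linarith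
        exact_mod_cast this)
    _ ≤ #((m * k) • A) := by
      rw [← hΛd]; exact_mod_cast hΛ.addDissociated.choose_card_le_card_nsmul hΛA _

theorem stmt0 :
    ∃ C : ℝ, 0 < C ∧
      ∀ (G : Type u) [AddCommGroup G] [DecidableEq G] (A : Finset G),
        2 ≤ A.card →
        ∀ n : ℕ, 1 ≤ n → (n : ℝ) ≤ C⁻¹ * Real.logb 2 A.card →
          ((nFold A n).card : ℝ) ≥
            (A.card : ℝ) * ((addDim 1 A : ℝ) / (C * Real.logb 2 A.card)) ^ (n - 1) := by
  refine ⟨4, by norm_num, fun G _ _ A hA n hn hnL ↦ ?_⟩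
  obtain ⟨m, rfl⟩ := Nat.exists_eq_add_of_le' hn
  have hA₀ : A.Nonempty := card_pos.1 (by omega)
  have hL : 1 ≤ Real.logb 2 #A := by
    rw [Real.le_logb_iff_rpow_le one_lt_two (by positivity), Real.rpow_one]
    exact_mod_cast hA
  rw [ge_iff_le, nFold_eq_nsmul, Nat.add_sub_cancel]
  by_cases hlarge : m ≠ 0 ∧ 4 * Real.logb 2 #A ≤ addDim 1 A
  · refine card_mul_addDim_div_pow_le_card_succ_nsmul hA₀ hlarge.1 ?_ hlarge.2
    push_cast at hnL
    linarith
  have hpow : ((addDim 1 A : ℝ) / (4 * Real.logb 2 #A)) ^ m ≤ 1 := by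
    rw [not_and_or, not_not, not_le] at hlarge
    rcases hlarge with rfl | hd
    · simp
    · exact pow_le_one₀ (by positivity) ((div_le_one (by linarith)).2 hd.le)
  calc (#A : ℝ) * _ ≤ #A := mul_le_of_le_one_right (by positivity) hpow
    _ ≤ #((m + 1) • A) := by exact_mod_cast card_le_card_nsmul m.succ_ne_zero
end

section
/- There is an absolute constant C > 0 with the following property. Let G be an abelian group and A ⊆ G a finite set with |A| ≥ 2. Then for every positive integer n with C⁻¹·log|A| ≤ n ≤ dim(A)/4 one has |nA| ≥ (dim(A)/(4n))^{n-1}. -/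
open Finset Pointwise

universe u

lemma sum_mem_nFold {G : Type*} [AddCommGroup G] [DecidableEq G] (A : Finset G) :
    ∀ (n : ℕ) (S : Finset G), S ⊆ A → S.card = n → (∑ x ∈ S, x) ∈ nFold A n := by
  intro n
  induction n with
  | zero =>
    intro S hS hc
    simp [Finset.card_eq_zero.mp hc, nFold]
  | succ n ih =>
    intro S hS hc
    obtain ⟨a, ha⟩ := Finset.card_pos.mp (by omega : 0 < S.card)
    have hS' : (S.erase a) ⊆ A := (Finset.erase_subset _ _).trans hS
    have hcard : (S.erase a).card = n := by
      rw [Finset.card_erase_of_mem ha, hc]; omega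
    have hmem := ih (S.erase a) hS' hcard
    rw [← Finset.sum_erase_add S _ ha]
    exact Finset.add_mem_add hmem (hS ha)

lemma subset_sum_inj {G : Type*} [AddCommGroup G] [DecidableEq G] {Λ : Finset G}
    (hΛ : IsKDissociated 1 Λ) {S T : Finset G} (hS : S ⊆ Λ) (hT : T ⊆ Λ)
    (h : (∑ x ∈ S, x) = ∑ x ∈ T, x) : S = T := by
  set ε : G → ℤ := fun x => (if x ∈ S then 1 else 0) - (if x ∈ T then 1 else 0) with hε
  have h1 : ∀ x ∈ Λ, |ε x| ≤ (1 : ℤ) := by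
    intro x _
    simp only [hε]
    split_ifs <;> norm_num
  have key : ∀ (U : Finset G), U ⊆ Λ →
      (∑ x ∈ Λ, (if x ∈ U then (1 : ℤ) else 0) • x) = ∑ x ∈ U, x := by
    intro U hU
    rw [show (fun x => (if x ∈ U then (1 : ℤ) else 0) • x)
        = fun x => (if x ∈ U then x else 0) from by funext x; split_ifs <;> simp]
    rw [Finset.sum_ite_mem, Finset.inter_eq_right.mpr hU]
  have h2 : (∑ x ∈ Λ, ε x • x) = 0 := by
    simp only [hε, sub_smul, Finset.sum_sub_distrib]
    rw [key S hS, key T hT, h, sub_self]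
  have h3 := hΛ ε h1 h2
  ext x
  by_cases hx : x ∈ Λ
  · have := h3 x hx
    simp only [hε] at this
    constructor <;> intro hmem <;> by_contra hnm <;> simp [hmem, hnm] at this
  · exact ⟨fun hmem => absurd (hS hmem) hx, fun hmem => absurd (hT hmem) hx⟩

lemma addDim_attained {G : Type*} [AddCommGroup G] (A : Finset G) :
    ∃ Λ : Finset G, Λ ⊆ A ∧ Λ.card = addDim 1 A ∧ IsKDissociated 1 Λ := by
  have hne : (0 : ℕ) ∈ {n : ℕ | ∃ Λ : Finset G, Λ ⊆ A ∧ Λ.card = n ∧ IsKDissociated 1 Λ} :=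
    ⟨∅, by simp, by simp, fun ε _ _ x hx => absurd hx (by simp)⟩
  have hbdd : BddAbove {n : ℕ | ∃ Λ : Finset G, Λ ⊆ A ∧ Λ.card = n ∧ IsKDissociated 1 Λ} :=
    ⟨A.card, fun n ⟨Λ, hΛ, hc, _⟩ => hc ▸ Finset.card_le_card hΛ⟩
  exact Nat.sSup_mem ⟨0, hne⟩ hbdd

theorem stmt1 :
    ∃ C : ℝ, 0 < C ∧
      ∀ (G : Type u) [AddCommGroup G] [DecidableEq G] (A : Finset G),
        2 ≤ A.card →
        ∀ n : ℕ, 1 ≤ n →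
          C⁻¹ * Real.logb 2 A.card ≤ (n : ℝ) → (n : ℝ) ≤ (addDim 1 A : ℝ) / 4 →
          ((nFold A n).card : ℝ) ≥ ((addDim 1 A : ℝ) / (4 * n)) ^ (n - 1) := by
  refine ⟨1, one_pos, ?_⟩
  intro G _ _ A _ n hn _ h4
  obtain ⟨Λ, hΛA, hΛcard, hΛdiss⟩ := addDim_attained (G := G) A
  set d := addDim 1 A with hd
  -- basic numeric facts
  have hdn : 4 * n ≤ d := by
    have : (4 : ℝ) * n ≤ (d : ℝ) := by linarith [h4]
    exact_mod_cast this
  have hnd : n ≤ d := by omega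
  -- counting: choose d n ≤ card (nFold A n)
  have hcount : (d.choose n : ℕ) ≤ (nFold A n).card := by
    have himg : (Finset.powersetCard n Λ).image (fun S => ∑ x ∈ S, x) ⊆ nFold A n := by
      intro y hy
      obtain ⟨S, hS, rfl⟩ := Finset.mem_image.mp hy
      obtain ⟨hSΛ, hScard⟩ := Finset.mem_powersetCard.mp hS
      exact sum_mem_nFold A n S (hSΛ.trans hΛA) hScard
    have hinj : Set.InjOn (fun S => ∑ x ∈ S, x) (Finset.powersetCard n Λ : Set (Finset G)) := by
      intro S hS T hT h
      exact subset_sum_inj hΛdiss (Finset.mem_powersetCard.mp hS).1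
        (Finset.mem_powersetCard.mp hT).1 h
    calc d.choose n = (Finset.powersetCard n Λ).card := by
          rw [Finset.card_powersetCard, hΛcard]
      _ = ((Finset.powersetCard n Λ).image (fun S => ∑ x ∈ S, x)).card :=
          (Finset.card_image_of_injOn hinj).symm
      _ ≤ (nFold A n).card := Finset.card_le_card himg
  -- real arithmetic
  have hnr : (1 : ℝ) ≤ (n : ℝ) := by exact_mod_cast hn
  have hdr : (4 : ℝ) * n ≤ (d : ℝ) := by exact_mod_cast hdn
  have hnpos : (0 : ℝ) < n := by linarith
  have hx1 : (1 : ℝ) ≤ (d : ℝ) / (4 * n) := by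
    rw [le_div_iff₀ (by linarith)]
    linarith
  have step1 : ((d : ℝ) / (4 * n)) ^ (n - 1) ≤ ((d : ℝ) / (4 * n)) ^ n :=
    pow_le_pow_right₀ hx1 (Nat.sub_le n 1)
  have step2 : ((d : ℝ) / (4 * n)) ^ n ≤ (((d : ℝ) - n) / n) ^ n := by
    apply pow_le_pow_left₀ (by positivity)
    rw [div_le_div_iff₀ (by linarith) hnpos]
    nlinarith
  have step3 : (((d : ℝ) - n) / n) ^ n ≤ ((d + 1 - n : ℕ) ^ n : ℝ) / (n.factorial : ℝ) := by
    rw [div_pow]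
    apply div_le_div₀ (by positivity) _ (by positivity)
      (by exact_mod_cast Nat.factorial_le_pow n)
    push_cast
    apply pow_le_pow_left₀ (by linarith)
    have : ((d + 1 - n : ℕ) : ℝ) = (d : ℝ) + 1 - n := by
      have : n ≤ d + 1 := by omega
      push_cast [Nat.cast_sub this]
      ring
    rw [this]
    linarith
  have step4 : ((d + 1 - n : ℕ) ^ n : ℝ) / (n.factorial : ℝ) ≤ (d.choose n : ℝ) := by
    have := Nat.pow_le_choose (α := ℝ) n d
    push_cast at this ⊢
    exact this
  have hfinal : (d.choose n : ℝ) ≤ ((nFold A n).card : ℝ) := by exact_mod_cast hcount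
  calc ((d : ℝ) / (4 * n)) ^ (n - 1) ≤ ((d : ℝ) / (4 * n)) ^ n := step1
    _ ≤ (((d : ℝ) - n) / n) ^ n := step2
    _ ≤ ((d + 1 - n : ℕ) ^ n : ℝ) / (n.factorial : ℝ) := step3
    _ ≤ (d.choose n : ℝ) := step4
    _ ≤ ((nFold A n).card : ℝ) := hfinal
end
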